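/- arXiv:1607.06926 — 4 statements merged into one kernel-verified Lean document; each statement's English description precedes it below -/
import Mathlib

section
/- Let 𝔤 be a finite-dimensional real Lie algebra and let ρ : 𝔤* → 𝔤 be a bijective skew-symmetric linear map. Define the bilinear form ω on 𝔤 by ω(x, y) := (ρ⁻¹ x)(y). Then ω is alternating and non-degenerate, and ρ satisfies the classical Yang–Baxter equation if and only if ω is a 2-cocycle on 𝔤. (In other words, non-degenerate r-matrices on 𝔤 are in one-to-one correspondence with symplectic structures on 𝔤.) -/
/-- Non-degenerate r-matrices correspond to symplectic structures: if
`ρ : 𝔤* → 𝔤` is a bijective skew-symmetric linear map with (linear) inverse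
`σ : 𝔤 → 𝔤*`, then the bilinear form `ω x y := (σ x) y = (ρ⁻¹ x) y` is
alternating and non-degenerate, and `ρ` satisfies the classical Yang–Baxter
equation if and only if `ω` is a 2-cocycle on `𝔤`. -/
theorem nondegenerate_r_matrix_iff_symplectic_structure
    (g : Type*) [LieRing g] [LieAlgebra ℝ g] [FiniteDimensional ℝ g]
    (ρ : Module.Dual ℝ g →ₗ[ℝ] g) (σ : g →ₗ[ℝ] Module.Dual ℝ g)
    (hinv₁ : ∀ f : Module.Dual ℝ g, σ (ρ f) = f)
    (hinv₂ : ∀ x : g, ρ (σ x) = x)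
    (hskew : ∀ f h : Module.Dual ℝ g, f (ρ h) = - h (ρ f)) :
    (∀ x : g, σ x x = 0) ∧
    (∀ x : g, (∀ y : g, σ x y = 0) → x = 0) ∧
    ((∀ f h k : Module.Dual ℝ g,
        f ⁅ρ h, ρ k⁆ + h ⁅ρ k, ρ f⁆ + k ⁅ρ f, ρ h⁆ = 0) ↔
      (∀ x y z : g, σ ⁅x, y⁆ z + σ ⁅y, z⁆ x + σ ⁅z, x⁆ y = 0)) := by
  have hσskew : ∀ a b : g, σ a b = - σ b a := by
    intro a b
    have := hskew (σ a) (σ b)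
    rwa [hinv₂, hinv₂] at this
  refine ⟨fun x => ?_, fun x hx => ?_, ?_⟩
  · have := hσskew x x; linarith
  · have hσ : σ x = 0 := LinearMap.ext hx
    calc x = ρ (σ x) := (hinv₂ x).symm
    _ = 0 := by rw [hσ, map_zero]
  · constructor
    · intro H x y z
      have h1 := H (σ x) (σ y) (σ z)
      rw [hinv₂, hinv₂, hinv₂] at h1
      have e1 := hσskew ⁅x, y⁆ z
      have e2 := hσskew ⁅y, z⁆ x
      have e3 := hσskew ⁅z, x⁆ y
      have e1' := hσskew z ⁅x, y⁆
      have e2' := hσskew x ⁅y, z⁆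
      have e3' := hσskew y ⁅z, x⁆
      linarith
    · intro H f h k
      have h1 := H (ρ f) (ρ h) (ρ k)
      have e1 : σ ⁅ρ f, ρ h⁆ (ρ k) = - k ⁅ρ f, ρ h⁆ := by
        have := hskew (σ ⁅ρ f, ρ h⁆) k; rwa [hinv₂] at this
      have e2 : σ ⁅ρ h, ρ k⁆ (ρ f) = - f ⁅ρ h, ρ k⁆ := by
        have := hskew (σ ⁅ρ h, ρ k⁆) f; rwa [hinv₂] at this
      have e3 : σ ⁅ρ k, ρ f⁆ (ρ h) = - h ⁅ρ k, ρ f⁆ := by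
        have := hskew (σ ⁅ρ k, ρ f⁆) h; rwa [hinv₂] at this
      linarith
end

section
/- Let 𝔤 be a finite-dimensional real Lie algebra and ρ : 𝔤* → 𝔤 a classical r-matrix with symplectic subalgebra 𝔤_r = range ρ, and let B be the induced bilinear form on 𝔤_r determined by B(ρ f, ρ g) = f(ρ g). Then B is a 2-cocycle on the Lie subalgebra 𝔤_r: B([x,y], z) + B([y,z], x) + B([z,x], y) = 0 for all x, y, z ∈ 𝔤_r. Consequently B is a symplectic structure on 𝔤_r. -/
/-- For a classical r-matrix `ρ : 𝔤* → 𝔤`, the induced bilinear form `B` on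
the symplectic subalgebra `𝔤_r = range ρ` determined by
`B (ρ f) (ρ h) = f (ρ h)` is a 2-cocycle on `𝔤_r` (where the bracket of
elements of `𝔤_r` is taken in `𝔤` and lands in `𝔤_r`); together with
non-degeneracy and alternation this makes `B` a symplectic structure on
`𝔤_r`. -/
theorem induced_form_is_symplectic_structure_on_symplectic_subalgebra
    (g : Type*) [LieRing g] [LieAlgebra ℝ g] [FiniteDimensional ℝ g]
    (ρ : Module.Dual ℝ g →ₗ[ℝ] g)
    (hskew : ∀ f h : Module.Dual ℝ g, f (ρ h) = - h (ρ f))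
    (hcybe : ∀ f h k : Module.Dual ℝ g,
      f ⁅ρ h, ρ k⁆ + h ⁅ρ k, ρ f⁆ + k ⁅ρ f, ρ h⁆ = 0) :
    ∃ B : LinearMap.range ρ →ₗ[ℝ] LinearMap.range ρ →ₗ[ℝ] ℝ,
      (∀ f h : Module.Dual ℝ g,
        B ⟨ρ f, LinearMap.mem_range_self ρ f⟩ ⟨ρ h, LinearMap.mem_range_self ρ h⟩
          = f (ρ h)) ∧
      (∀ x y z w₁ w₂ w₃ : LinearMap.range ρ,
        (w₁ : g) = ⁅(x : g), (y : g)⁆ → (w₂ : g) = ⁅(y : g), (z : g)⁆ →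
        (w₃ : g) = ⁅(z : g), (x : g)⁆ →
        B w₁ z + B w₂ x + B w₃ y = 0) ∧
      (∀ x : LinearMap.range ρ, B x x = 0) ∧
      (∀ x : LinearMap.range ρ, (∀ y : LinearMap.range ρ, B x y = 0) → x = 0) := by
  -- a linear right inverse of the range restriction of ρ
  obtain ⟨s, hs⟩ := ρ.rangeRestrict.exists_rightInverse_of_surjective
    (LinearMap.range_rangeRestrict ρ)
  have hsval : ∀ y : LinearMap.range ρ, ρ (s y) = (y : g) := by
    intro y
    have := congrArg (fun m => ((m y : LinearMap.range ρ) : g)) hs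
    simpa [LinearMap.rangeRestrict] using this
  -- key: functionals with the same image under ρ agree on range ρ
  have key : ∀ f h : Module.Dual ℝ g, ρ f = ρ h →
      ∀ x : LinearMap.range ρ, f (x : g) = h (x : g) := by
    rintro f h hfh ⟨x, k, rfl⟩
    simp only
    rw [hskew f k, hskew h k, hfh]
  -- definition of B
  refine ⟨LinearMap.mk₂ ℝ (fun x y => -(s y) (x : g))
    (by intro x x' y; simp; ring)
    (by intro c x y; simp)
    (by intro x y y'; simp; ring)
    (by intro c x y; simp), ?_, ?_, ?_, ?_⟩
  · intro f h
    have h1 : ρ (s ⟨ρ h, LinearMap.mem_range_self ρ h⟩) = ρ h :=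
      hsval ⟨ρ h, LinearMap.mem_range_self ρ h⟩
    have h2 := key _ _ h1 ⟨ρ f, LinearMap.mem_range_self ρ f⟩
    simp only [LinearMap.mk₂_apply]
    rw [h2, hskew h f]
    ring
  · intro x y z w₁ w₂ w₃ hw₁ hw₂ hw₃
    obtain ⟨f, hf⟩ := x.2
    obtain ⟨h, hh⟩ := y.2
    obtain ⟨k, hk⟩ := z.2
    simp only [LinearMap.mk₂_apply]
    have h1 : (s z) (w₁ : g) = k (w₁ : g) := key _ _ (by rw [hsval z, hk]) w₁
    have h2 : (s x) (w₂ : g) = f (w₂ : g) := key _ _ (by rw [hsval x, hf]) w₂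
    have h3 : (s y) (w₃ : g) = h (w₃ : g) := key _ _ (by rw [hsval y, hh]) w₃
    have hc := hcybe f h k
    rw [hw₁, ← hf, ← hh] at h1
    rw [hw₂, ← hh, ← hk] at h2
    rw [hw₃, ← hk, ← hf] at h3
    rw [hw₁, hw₂, hw₃, ← hf, ← hh, ← hk]
    linarith
  · intro x
    have h1 : ρ (s x) = (x : g) := hsval x
    simp only [LinearMap.mk₂_apply]
    rw [← h1]
    have := hskew (s x) (s x)
    linarith
  · intro x hx
    have hzero : ∀ h : Module.Dual ℝ g, h (x : g) = 0 := by
      intro h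
      have := hx ⟨ρ h, LinearMap.mem_range_self ρ h⟩
      simp only [LinearMap.mk₂_apply] at this
      have hk := key _ h (hsval ⟨ρ h, LinearMap.mem_range_self ρ h⟩) x
      rw [hk] at this
      linarith
    exact Subtype.ext ((Module.forall_dual_apply_eq_zero_iff ℝ (x : g)).mp hzero)
end

section
/- Let A be a commutative associative algebra over ℝ, and let (C_k)_{k≥0} be a sequence of bilinear maps C_k : A × A → A with C_0(a,b) = a·b (the given multiplication), satisfying for every n ≥ 0 and all a, b, c ∈ A the order-by-order associativity conditions Σ_{i+j=n} C_i(C_j(a,b), c) = Σ_{i+j=n} C_i(a, C_j(b,c)) (i.e., the C_k are the coefficients of a formal associative deformation of A). Define {a, b} := C_1(a,b) − C_1(b,a). Then {·,·} is a Poisson bracket on A: it is bilinear, antisymmetric, satisfies the Leibniz rule {a, b·c} = {a,b}·c + b·{a,c} for all a, b, c, and satisfies the Jacobi identity {a,{b,c}} + {b,{c,a}} + {c,{a,b}} = 0. -/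
/-- The semiclassical limit of a formal associative deformation of a
commutative algebra is a Poisson bracket: if `C_k` are the bilinear
coefficients of a formal deformation of a commutative associative ℝ-algebra
`A` (so `C_0` is the multiplication and the order-by-order associativity
conditions hold), then `{a, b} := C_1 a b - C_1 b a` is bilinear,
antisymmetric, satisfies the Leibniz rule, and satisfies the Jacobi
identity. -/
theorem semiclassical_limit_is_poisson_bracket
    (A : Type*) [CommRing A] [Algebra ℝ A]
    (C : ℕ → A →ₗ[ℝ] A →ₗ[ℝ] A)
    (hC0 : ∀ a b : A, C 0 a b = a * b)
    (hassoc : ∀ (n : ℕ) (a b c : A),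
      ∑ i ∈ Finset.range (n + 1), C i (C (n - i) a b) c
        = ∑ i ∈ Finset.range (n + 1), C i a (C (n - i) b c)) :
    ∀ br : A → A → A, (∀ a b : A, br a b = C 1 a b - C 1 b a) →
      (∀ a a' b : A, br (a + a') b = br a b + br a' b) ∧
      (∀ (t : ℝ) (a b : A), br (t • a) b = t • br a b) ∧
      (∀ a b b' : A, br a (b + b') = br a b + br a b') ∧
      (∀ (t : ℝ) (a b : A), br a (t • b) = t • br a b) ∧
      (∀ a b : A, br a b = - br b a) ∧
      (∀ a b c : A, br a (b * c) = br a b * c + b * br a c) ∧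
      (∀ a b c : A, br a (br b c) + br b (br c a) + br c (br a b) = 0) := by
  intro br hbr
  have h1 : ∀ x y z : A, C 1 x y * z + C 1 (x*y) z = x * C 1 y z + C 1 x (y*z) := by
    intro x y z
    have h := hassoc 1 x y z
    simp only [Finset.sum_range_succ, Finset.sum_range_one, hC0] at h
    linear_combination h
  have h2 : ∀ x y z : A, C 2 x y * z + C 1 (C 1 x y) z + C 2 (x*y) z
      = x * C 2 y z + C 1 x (C 1 y z) + C 2 x (y*z) := by
    intro x y z
    have h := hassoc 2 x y z
    simp only [Finset.sum_range_succ, Finset.sum_range_one, hC0] at h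
    linear_combination h
  refine ⟨?_, ?_, ?_, ?_, ?_, ?_, ?_⟩
  · intro a a' b; simp only [hbr, map_add, LinearMap.add_apply]; ring
  · intro t a b; simp only [hbr, map_smul, LinearMap.smul_apply, smul_sub]
  · intro a b b'; simp only [hbr, map_add, LinearMap.add_apply]; ring
  · intro t a b; simp only [hbr, map_smul, LinearMap.smul_apply, smul_sub]
  · intro a b; simp only [hbr]; ring
  · intro a b c
    simp only [hbr]
    have hx : C 1 (a*b) c = C 1 (b*a) c := by rw [mul_comm]
    have hy : C 1 b (a*c) = C 1 b (c*a) := by rw [mul_comm]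
    linear_combination (-(h1 a b c)) - h1 b c a + h1 b a c + hx + hy
  · intro a b c
    simp only [hbr, map_sub, LinearMap.sub_apply]
    have e1 : C 2 a (b*c) = C 2 a (c*b) := by rw [mul_comm]
    have e2 : C 2 b (c*a) = C 2 b (a*c) := by rw [mul_comm]
    have e3 : C 2 c (a*b) = C 2 c (b*a) := by rw [mul_comm]
    have f1 : C 2 (a*b) c = C 2 (b*a) c := by rw [mul_comm]
    have f2 : C 2 (b*c) a = C 2 (c*b) a := by rw [mul_comm]
    have f3 : C 2 (c*a) b = C 2 (a*c) b := by rw [mul_comm]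
    linear_combination (-(h2 a b c)) + h2 b a c - h2 b c a + h2 c b a - h2 c a b + h2 a c b
      - e1 - e2 - e3 + f1 + f2 + f3
end

section
/- Let 𝔤 be a real Lie algebra acting by derivations on a commutative associative ℝ-algebra A, i.e., let D : 𝔤 → Der(A) be a Lie algebra homomorphism into the Lie algebra of derivations of A (with the commutator bracket). Let r ∈ 𝔤 ⊗ 𝔤 be antisymmetric (τ(r) = −r for the flip τ of the two tensor factors) and satisfy the classical Yang–Baxter equation in 𝔤 ⊗ 𝔤 ⊗ 𝔤: writing r = Σ_i a_i ⊗ b_i, one has Σ_{i,j} ( [a_i, a_j] ⊗ b_i ⊗ b_j + a_i ⊗ [b_i, a_j] ⊗ b_j + a_i ⊗ a_j ⊗ [b_i, b_j] ) = 0. Define {x, y} := Σ_i D(a_i)(x) · D(b_i)(y) for x, y ∈ A. Then {·,·} is a Poisson bracket on A: bilinear, antisymmetric, a derivation in each argument ({x, y·z} = {x,y}·z + y·{x,z}), and satisfying the Jacobi identity {x,{y,z}} + {y,{z,x}} + {z,{x,y}} = 0. -/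
/-!
Write `X_u = D u`. Since `{x, -}` is a derivation,
`{x, {y, z}} = ∑ⱼ ({x, X_{aⱼ} y} X_{bⱼ} z + X_{aⱼ} y {x, X_{bⱼ} z})`.
After moving the legs of `r` in two of the six terms of the cyclic sum (antisymmetry of `r`, in
the form `∑ f (bᵢ) h (aᵢ) = -∑ f (aᵢ) h (bᵢ)`), the cyclic sum becomes the image of the left-hand
side of the classical Yang–Baxter equation under `u ⊗ v ⊗ w ↦ X_u x · X_v y · X_w z`, once the
brackets are expanded as `X_{⁅u, v⁆} = X_u X_v - X_v X_u`.
-/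

open scoped TensorProduct

section Antisymmetric

variable {R M A : Type*} [CommRing R] [AddCommGroup M] [Module R M] [CommRing A] [Algebra R A]
  {ι : Type*} [Fintype ι] {a b : ι → M}

lemma sum_mul_swap_of_antisymm (hanti : (∑ i, b i ⊗ₜ[R] a i : M ⊗[R] M) = - ∑ i, a i ⊗ₜ[R] b i)
    (f h : M →ₗ[R] A) : ∑ i, f (b i) * h (a i) = -∑ i, f (a i) * h (b i) := by
  simpa using congrArg (LinearMap.mul' R A ∘ₗ TensorProduct.map f h) hanti

end Antisymmetric

section RMatrixBracket

variable {R g A : Type*} [CommRing R] [LieRing g] [LieAlgebra R g] [CommRing A] [Algebra R A]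
  (D : g →ₗ⁅R⁆ Derivation R A A)

def actionAt (x : A) : g →ₗ[R] A where
  toFun u := D u x
  map_add' u v := by simp
  map_smul' t u := by simp

@[simp] lemma actionAt_apply (x : A) (u : g) : actionAt D x u = D u x := rfl

variable {ι : Type*} [Fintype ι] (a b : ι → g)

def rMatrixBracket : A →ₗ[R] A →ₗ[R] A :=
  ∑ i, (LinearMap.mul R A).compl₁₂ (D (a i) : A →ₗ[R] A) (D (b i))

lemma rMatrixBracket_apply (x y : A) :
    rMatrixBracket D a b x y = ∑ i, D (a i) x * D (b i) y := by
  simp [rMatrixBracket, LinearMap.sum_apply]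

lemma rMatrixBracket_mul_right (x y z : A) :
    rMatrixBracket D a b x (y * z) =
      rMatrixBracket D a b x y * z + y * rMatrixBracket D a b x z := by
  simp only [rMatrixBracket_apply, Finset.sum_mul, Finset.mul_sum, ← Finset.sum_add_distrib]
  refine Finset.sum_congr rfl fun i _ => ?_
  rw [Derivation.leibniz, smul_eq_mul, smul_eq_mul]
  ring

lemma rMatrixBracket_rMatrixBracket (x y z : A) :
    rMatrixBracket D a b x (rMatrixBracket D a b y z) =
      ∑ j, rMatrixBracket D a b x (D (a j) y) * D (b j) z
        + ∑ j, D (a j) y * rMatrixBracket D a b x (D (b j) z) := by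
  rw [rMatrixBracket_apply D a b y z, map_sum, ← Finset.sum_add_distrib]
  simp only [rMatrixBracket_mul_right]

variable {a b}

lemma rMatrixBracket_antisymm
    (hanti : (∑ i, b i ⊗ₜ[R] a i : g ⊗[R] g) = - ∑ i, a i ⊗ₜ[R] b i) (x y : A) :
    rMatrixBracket D a b x y = -rMatrixBracket D a b y x := by
  simpa [rMatrixBracket_apply, mul_comm] using
    sum_mul_swap_of_antisymm hanti (actionAt D y) (actionAt D x)

lemma cybe_apply_actionAt (hcybe : (∑ i, ∑ j,
        (⁅a i, a j⁆ ⊗ₜ[R] (b i ⊗ₜ[R] b j)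
          + a i ⊗ₜ[R] (⁅b i, a j⁆ ⊗ₜ[R] b j)
          + a i ⊗ₜ[R] (a j ⊗ₜ[R] ⁅b i, b j⁆)) : g ⊗[R] (g ⊗[R] g)) = 0) (x y z : A) :
    ∑ i, ∑ j, (D ⁅a i, a j⁆ x * (D (b i) y * D (b j) z)
      + D (a i) x * (D ⁅b i, a j⁆ y * D (b j) z)
      + D (a i) x * (D (a j) y * D ⁅b i, b j⁆ z)) = 0 := by
  simpa using congrArg (LinearMap.mul' R A ∘ₗ TensorProduct.map (actionAt D x)
    (LinearMap.mul' R A ∘ₗ TensorProduct.map (actionAt D y) (actionAt D z))) hcybe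

lemma cybe_rMatrixBracket (hcybe : (∑ i, ∑ j,
        (⁅a i, a j⁆ ⊗ₜ[R] (b i ⊗ₜ[R] b j)
          + a i ⊗ₜ[R] (⁅b i, a j⁆ ⊗ₜ[R] b j)
          + a i ⊗ₜ[R] (a j ⊗ₜ[R] ⁅b i, b j⁆)) : g ⊗[R] (g ⊗[R] g)) = 0) (x y z : A) :
    ∑ j, rMatrixBracket D a b (D (a j) x) y * D (b j) z
        + ∑ j, rMatrixBracket D a b x (D (a j) y) * D (b j) z
        + ∑ j, D (a j) y * rMatrixBracket D a b x (D (b j) z) =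
      ∑ j, D (b j) y * rMatrixBracket D a b (D (a j) x) z
        + ∑ j, D (a j) x * rMatrixBracket D a b (D (b j) y) z
        + ∑ j, D (a j) x * rMatrixBracket D a b y (D (b j) z) := by
  have h := cybe_apply_actionAt D hcybe x y z
  simp only [LieHom.map_lie, Derivation.commutator_apply] at h
  rw [← sub_eq_zero, ← h]
  simp only [rMatrixBracket_apply, Finset.mul_sum, Finset.sum_mul, ← Finset.sum_add_distrib]
  rw [Finset.sum_comm, ← Finset.sum_sub_distrib]
  refine Finset.sum_congr rfl fun i _ => ?_
  rw [← Finset.sum_sub_distrib]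
  refine Finset.sum_congr rfl fun j _ => ?_
  ring

lemma rMatrixBracket_jacobi
    (hanti : (∑ i, b i ⊗ₜ[R] a i : g ⊗[R] g) = - ∑ i, a i ⊗ₜ[R] b i)
    (hcybe : (∑ i, ∑ j,
        (⁅a i, a j⁆ ⊗ₜ[R] (b i ⊗ₜ[R] b j)
          + a i ⊗ₜ[R] (⁅b i, a j⁆ ⊗ₜ[R] b j)
          + a i ⊗ₜ[R] (a j ⊗ₜ[R] ⁅b i, b j⁆)) : g ⊗[R] (g ⊗[R] g)) = 0) (x y z : A) :
    rMatrixBracket D a b x (rMatrixBracket D a b y z)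
      + rMatrixBracket D a b y (rMatrixBracket D a b z x)
      + rMatrixBracket D a b z (rMatrixBracket D a b x y) = 0 := by
  have swap_x : ∑ j, rMatrixBracket D a b y (D (a j) z) * D (b j) x
      = -∑ j, D (a j) x * rMatrixBracket D a b y (D (b j) z) := by
    simpa [mul_comm] using sum_mul_swap_of_antisymm hanti (actionAt D x)
      (rMatrixBracket D a b y ∘ₗ actionAt D z)
  have swap_z : ∑ j, D (a j) z * rMatrixBracket D a b y (D (b j) x)
      = ∑ j, rMatrixBracket D a b (D (a j) x) y * D (b j) z := by
    have h := sum_mul_swap_of_antisymm hanti (actionAt D z)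
      (rMatrixBracket D a b y ∘ₗ actionAt D x)
    simp only [actionAt_apply, LinearMap.comp_apply] at h
    calc _ = -∑ j, D (b j) z * rMatrixBracket D a b y (D (a j) x) := by rw [h, neg_neg]
      _ = _ := by simp [rMatrixBracket_antisymm D hanti y, mul_comm]
  have antisymm_left : ∑ j, rMatrixBracket D a b z (D (a j) x) * D (b j) y
      = -∑ j, D (b j) y * rMatrixBracket D a b (D (a j) x) z := by
    simp [rMatrixBracket_antisymm D hanti z, mul_comm]
  have antisymm_right : ∑ j, D (a j) x * rMatrixBracket D a b z (D (b j) y)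
      = -∑ j, D (a j) x * rMatrixBracket D a b (D (b j) y) z := by
    simp [rMatrixBracket_antisymm D hanti z]
  rw [rMatrixBracket_rMatrixBracket, rMatrixBracket_rMatrixBracket, rMatrixBracket_rMatrixBracket]
  linear_combination swap_x + swap_z + antisymm_left + antisymm_right
    + cybe_rMatrixBracket D hcybe x y z

end RMatrixBracket

/-- If a real Lie algebra `𝔤` acts by derivations on a commutative
associative ℝ-algebra `A` via a Lie algebra homomorphism
`D : 𝔤 → Der(A)`, and `r = Σᵢ aᵢ ⊗ bᵢ ∈ 𝔤 ⊗ 𝔤` is antisymmetric and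
satisfies the classical Yang–Baxter equation in `𝔤 ⊗ 𝔤 ⊗ 𝔤`, then
`{x, y} := Σᵢ D(aᵢ)(x) · D(bᵢ)(y)` is a Poisson bracket on `A`:
bilinear, antisymmetric, a derivation in each argument, and satisfying
the Jacobi identity. -/
theorem r_matrix_action_induces_poisson_bracket
    (g A : Type*) [LieRing g] [LieAlgebra ℝ g]
    [CommRing A] [Algebra ℝ A]
    (D : g →ₗ⁅ℝ⁆ Derivation ℝ A A)
    (ι : Type*) [Fintype ι] (a b : ι → g)
    (hanti : (∑ i, b i ⊗ₜ[ℝ] a i : g ⊗[ℝ] g) = - ∑ i, a i ⊗ₜ[ℝ] b i)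
    (hcybe : (∑ i, ∑ j,
        (⁅a i, a j⁆ ⊗ₜ[ℝ] (b i ⊗ₜ[ℝ] b j)
          + a i ⊗ₜ[ℝ] (⁅b i, a j⁆ ⊗ₜ[ℝ] b j)
          + a i ⊗ₜ[ℝ] (a j ⊗ₜ[ℝ] ⁅b i, b j⁆)) : g ⊗[ℝ] (g ⊗[ℝ] g)) = 0) :
    ∀ br : A → A → A, (∀ x y : A, br x y = ∑ i, D (a i) x * D (b i) y) →
      (∀ x x' y : A, br (x + x') y = br x y + br x' y) ∧
      (∀ (t : ℝ) (x y : A), br (t • x) y = t • br x y) ∧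
      (∀ x y y' : A, br x (y + y') = br x y + br x y') ∧
      (∀ (t : ℝ) (x y : A), br x (t • y) = t • br x y) ∧
      (∀ x y : A, br x y = - br y x) ∧
      (∀ x y z : A, br x (y * z) = br x y * z + y * br x z) ∧
      (∀ x y z : A, br x (br y z) + br y (br z x) + br z (br x y) = 0) := by
  intro br hbr
  obtain rfl : br = fun x y => rMatrixBracket D a b x y := by
    funext x y
    rw [hbr, rMatrixBracket_apply]
  exact ⟨fun x x' y => LinearMap.map_add₂ _ x x' y, fun t x y => LinearMap.map_smul₂ _ t x y,
    fun x y y' => map_add _ y y', fun t x y => map_smul _ t y,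
    rMatrixBracket_antisymm D hanti, rMatrixBracket_mul_right D a b,
    rMatrixBracket_jacobi D hanti hcybe⟩
end
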